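/- arXiv:1111.6937 — 6 statements merged into one kernel-verified Lean document; each statement's English description precedes it below -/
import Mathlib

section
/- Let D be a dataset with d-index d, where the d-index is the maximum integer q such that D contains at least q distinct transactions of length at least q forming an anti-chain under set inclusion. Then the VC-dimension of the range space (D, R) associated with D is at most d. -/
open Finset

def suppSet {α : Type*} [DecidableEq α] (D : Finset (Finset α)) (A : Finset α) :
    Finset (Finset α) :=
  D.filter (fun τ => A ⊆ τ)

def Shattered {α : Type*} [DecidableEq α] (D K : Finset (Finset α)) : Prop :=
  ∀ B ⊆ K, ∃ A : Finset α, A.Nonempty ∧ suppSet D A ∩ K = B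

/-- `D` contains at least `q` distinct transactions of length at least `q`
forming an anti-chain under inclusion. -/
def dIndexGe {α : Type*} [DecidableEq α] (D : Finset (Finset α)) (q : ℕ) : Prop :=
  ∃ A ⊆ D, q ≤ A.card ∧ (∀ τ ∈ A, q ≤ τ.card) ∧
    IsAntichain (· ⊆ ·) (A : Set (Finset α))

/-- The d-index of a dataset. -/
noncomputable def dIndex {α : Type*} [DecidableEq α] (D : Finset (Finset α)) : ℕ :=
  sSup {q | dIndexGe D q}

/-!
A shattered set `K` of transactions is itself a witness for the d-index. The range cutting out
`{τ}` is `T_D(A)` with `∅ ≠ A ⊆ τ`, and it would also contain any `σ ∈ K` with `τ ⊆ σ`; so `K`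
is an antichain. The `2 ^ (|K| - 1)` subsets of `K` containing `τ` are all cut out by ranges
`T_D(A)` with `∅ ≠ A ⊆ τ`, of which there are only `2 ^ |τ| - 1`; hence `|K| ≤ |τ|`.
-/

section

variable {α : Type*} [DecidableEq α] {D K B : Finset (Finset α)} {A τ : Finset α}

@[simp]
theorem mem_suppSet : τ ∈ suppSet D A ↔ τ ∈ D ∧ A ⊆ τ :=
  mem_filter

theorem Shattered.exists_subset_of_mem (hSh : Shattered D K) (hB : B ⊆ K) (hτ : τ ∈ B) :
    ∃ A, A.Nonempty ∧ A ⊆ τ ∧ suppSet D A ∩ K = B := by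
  obtain ⟨A, hA, hAB⟩ := hSh B hB
  have hτA : τ ∈ suppSet D A ∩ K := hAB ▸ hτ
  exact ⟨A, hA, (mem_suppSet.mp (mem_inter.mp hτA).1).2, hAB⟩

theorem Shattered.isAntichain (hK : K ⊆ D) (hSh : Shattered D K) :
    IsAntichain (· ⊆ ·) (K : Set (Finset α)) := by
  intro τ hτ σ hσ hne hτσ
  obtain ⟨A, -, hAτ, hAK⟩ :=
    hSh.exists_subset_of_mem (singleton_subset_iff.mpr hτ) (mem_singleton_self τ)
  have hσA : σ ∈ suppSet D A ∩ K :=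
    mem_inter.mpr ⟨mem_suppSet.mpr ⟨hK hσ, hAτ.trans hτσ⟩, hσ⟩
  rw [hAK, mem_singleton] at hσA
  exact hne hσA.symm

theorem Shattered.card_le_card_of_mem (hSh : Shattered D K) (hτ : τ ∈ K) :
    K.card ≤ τ.card := by
  have hsurj : Set.SurjOn (fun A => (suppSet D A ∩ K).erase τ) (τ.powerset.erase ∅ : Set _)
      ((K.erase τ).powerset : Set (Finset (Finset α))) := by
    intro B hB
    have hB : B ⊆ K.erase τ := mem_powerset.mp hB
    have hτB : τ ∉ B := fun h => (mem_erase.mp (hB h)).1 rfl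
    obtain ⟨A, hA, hAτ, hAK⟩ := hSh.exists_subset_of_mem
      (insert_subset hτ (hB.trans (erase_subset τ K))) (mem_insert_self τ B)
    exact ⟨A, mem_erase.mpr ⟨hA.ne_empty, mem_powerset.mpr hAτ⟩,
      by simp only [hAK, erase_insert hτB]⟩
  have hcount : 2 ^ (K.card - 1) ≤ 2 ^ τ.card - 1 := by
    simpa [card_erase_of_mem hτ, card_erase_of_mem (empty_mem_powerset τ)]
      using card_le_card_of_surjOn _ hsurj
  have hτ_len : K.card - 1 < τ.card :=
    (Nat.pow_lt_pow_iff_right (by norm_num)).mp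
      (hcount.trans_lt (Nat.sub_lt (Nat.pow_pos two_pos) one_pos))
  have hK_pos : 0 < K.card := card_pos.mpr ⟨τ, hτ⟩
  omega

theorem Shattered.dIndexGe_card (hK : K ⊆ D) (hSh : Shattered D K) : dIndexGe D K.card :=
  ⟨K, hK, le_rfl, fun _ hτ => hSh.card_le_card_of_mem hτ, hSh.isAntichain hK⟩

theorem le_dIndex_of_dIndexGe {q : ℕ} (hq : dIndexGe D q) : q ≤ dIndex D := by
  have hbdd : BddAbove {q | dIndexGe D q} :=
    ⟨D.card, fun p ⟨A, hA, hpA, _⟩ => hpA.trans (card_le_card hA)⟩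
  exact le_csSup hbdd hq

end

/-- if `D` has d-index `d`, the VC-dimension of the associated range space
is at most `d`, i.e. every shattered set of transactions has cardinality at most `d`. -/
theorem vcDim_le_dIndex {α : Type*} [DecidableEq α] (D : Finset (Finset α)) (d : ℕ)
    (hd : dIndex D = d) :
    ∀ K ⊆ D, Shattered D K → K.card ≤ d := by
  intro K hK hSh
  exact hd ▸ le_dIndex_of_dIndexGe (hSh.dIndexGe_card hK)
end

section
/- For every integer d ≥ 1 there exists a dataset D with d-index equal to d such that the VC-dimension of the associated range space (D, R) is exactly d. In particular, taking ground set ℕ and for d > 1 the transactions τ_i = {0,1,...,d} \ {i} for 1 ≤ i ≤ d, any dataset D containing {τ_1,...,τ_d} together with arbitrary additional transactions of length at most d has VC-dimension exactly d. -/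
open Finset

/-- The VC-dimension of `(D, {T_D(A)})` is exactly `d`. -/
def vcDimEq {α : Type*} [DecidableEq α] (D : Finset (Finset α)) (d : ℕ) : Prop :=
  (∃ K ⊆ D, K.card = d ∧ Shattered D K) ∧ (∀ K ⊆ D, Shattered D K → K.card ≤ d)

/-- the transaction `τ_i` -/
def tauT (d i : ℕ) : Finset ℕ := (Finset.range (d + 1)).erase i

lemma mem_tauT {d i j : ℕ} : j ∈ tauT d i ↔ j ≠ i ∧ j < d + 1 := by
  simp [tauT]

lemma tauT_card {d i : ℕ} (h : i ≤ d) : (tauT d i).card = d := by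
  rw [tauT, card_erase_of_mem (by simp; omega), card_range]
  omega

lemma tauT_injOn {d : ℕ} {i j : ℕ} (hi : i ∈ Finset.Icc 1 d) (hj : j ∈ Finset.Icc 1 d)
    (h : tauT d i = tauT d j) : i = j := by
  simp only [mem_Icc] at hi hj
  by_contra hne
  have : i ∈ tauT d j := mem_tauT.mpr ⟨hne, by omega⟩
  rw [← h] at this
  exact (mem_tauT.mp this).1 rfl

lemma shattered_card_le (d : ℕ) (D K : Finset (Finset ℕ))
    (hcard : ∀ τ ∈ D, τ.card ≤ d) (hKD : K ⊆ D)
    (hS : Shattered D K) : K.card ≤ d := by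
  rcases K.eq_empty_or_nonempty with rfl | ⟨τ₀, hτ₀⟩
  · simp
  obtain ⟨A₀, hA₀ne, hA₀⟩ := hS K Subset.rfl
  obtain ⟨a, haA₀⟩ := hA₀ne
  have ha : ∀ τ ∈ K, a ∈ τ := by
    intro τ hτ
    have hin : τ ∈ suppSet D A₀ ∩ K := hA₀.symm ▸ hτ
    exact (mem_filter.mp (mem_inter.mp hin).1).2 haA₀
  have hex : ∀ τ : Finset ℕ, ∃ b : ℕ, τ ∈ K →
      b ∉ τ ∧ ∀ σ ∈ K, σ ≠ τ → b ∈ σ := by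
    intro τ
    by_cases hτ : τ ∈ K
    · obtain ⟨A, hAne, hA⟩ := hS (K.erase τ) (erase_subset _ _)
      have hτn : τ ∉ suppSet D A ∩ K := by
        rw [hA]; exact notMem_erase _ _
      have hnot : ¬ A ⊆ τ := fun hsub =>
        hτn (mem_inter.mpr ⟨mem_filter.mpr ⟨hKD hτ, hsub⟩, hτ⟩)
      obtain ⟨b, hbA, hbτ⟩ := not_subset.mp hnot
      refine ⟨b, fun _ => ⟨hbτ, fun σ hσ hστ => ?_⟩⟩
      have hin : σ ∈ suppSet D A ∩ K := by
        rw [hA]; exact mem_erase.mpr ⟨hστ, hσ⟩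
      exact (mem_filter.mp (mem_inter.mp hin).1).2 hbA
    · exact ⟨0, fun h => absurd h hτ⟩
  choose f hf using hex
  have hsub : insert a ((K.erase τ₀).image f) ⊆ τ₀ := by
    intro x hx
    rcases mem_insert.mp hx with rfl | hx
    · exact ha τ₀ hτ₀
    · obtain ⟨σ, hσ, rfl⟩ := mem_image.mp hx
      exact (hf σ (mem_of_mem_erase hσ)).2 τ₀ hτ₀ (ne_of_mem_erase hσ).symm
  have hanotin : a ∉ (K.erase τ₀).image f := by
    intro hmem
    obtain ⟨σ, hσ, heq⟩ := mem_image.mp hmem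
    have hσK := mem_of_mem_erase hσ
    exact (hf σ hσK).1 (heq ▸ ha σ hσK)
  have hinj : Set.InjOn f (K.erase τ₀) := by
    intro σ hσ σ' hσ' heq
    by_contra hne
    have h1 : f σ' ∈ σ := (hf σ' (mem_of_mem_erase (by exact_mod_cast hσ'))).2 σ
      (mem_of_mem_erase (by exact_mod_cast hσ)) hne
    rw [← heq] at h1
    exact (hf σ (mem_of_mem_erase (by exact_mod_cast hσ))).1 h1
  have hc1 : (insert a ((K.erase τ₀).image f)).card = (K.erase τ₀).card + 1 := by
    rw [card_insert_of_notMem hanotin, card_image_of_injOn hinj]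
  have hc2 : (insert a ((K.erase τ₀).image f)).card ≤ τ₀.card := card_le_card hsub
  have hc3 : τ₀.card ≤ d := hcard τ₀ (hKD hτ₀)
  have hc4 : K.card = (K.erase τ₀).card + 1 := by
    rw [card_erase_of_mem hτ₀]
    have := card_pos.mpr ⟨τ₀, hτ₀⟩
    omega
  omega

lemma main_vc (d : ℕ) (hd : 1 ≤ d) (D : Finset (Finset ℕ))
    (hmem : ∀ i, 1 ≤ i → i ≤ d → tauT d i ∈ D)
    (hcard : ∀ τ ∈ D, τ.card ≤ d) : vcDimEq D d := by
  constructor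
  · refine ⟨(Finset.Icc 1 d).image (tauT d), ?_, ?_, ?_⟩
    · intro σ hσ
      obtain ⟨i, hi, rfl⟩ := mem_image.mp hσ
      simp only [mem_Icc] at hi
      exact hmem i hi.1 hi.2
    · rw [card_image_of_injOn (fun i hi j hj h => tauT_injOn hi hj h), Nat.card_Icc]
      omega
    · intro B hB
      refine ⟨insert 0 ((Finset.Icc 1 d).filter (fun i => tauT d i ∉ B)),
        ⟨0, mem_insert_self _ _⟩, ?_⟩
      ext σ
      simp only [mem_inter, suppSet, mem_filter]
      constructor
      · rintro ⟨⟨hσD, hAσ⟩, hσK⟩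
        obtain ⟨j, hj, rfl⟩ := mem_image.mp hσK
        by_contra hσB
        have hjA : j ∈ insert 0 ((Finset.Icc 1 d).filter (fun i => tauT d i ∉ B)) :=
          mem_insert_of_mem (mem_filter.mpr ⟨hj, hσB⟩)
        exact (mem_tauT.mp (hAσ hjA)).1 rfl
      · intro hσB
        have hσK := hB hσB
        obtain ⟨j, hj, rfl⟩ := mem_image.mp hσK
        simp only [mem_Icc] at hj
        refine ⟨⟨hmem j hj.1 hj.2, ?_⟩, hσK⟩
        intro x hx
        rcases mem_insert.mp hx with rfl | hx
        · exact mem_tauT.mpr ⟨by omega, by omega⟩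
        · obtain ⟨hxI, hxB⟩ := mem_filter.mp hx
          simp only [mem_Icc] at hxI
          refine mem_tauT.mpr ⟨fun h => hxB (h ▸ hσB), by omega⟩
  · intro K hK hS
    exact shattered_card_le d D K hcard hK hS

lemma D0_card (d : ℕ) (hd : 1 ≤ d) :
    ((Finset.Icc 1 d).image (tauT d)).card = d := by
  rw [card_image_of_injOn (fun i hi j hj h => tauT_injOn hi hj h), Nat.card_Icc]
  omega

/-- for every `d ≥ 1` there is a dataset with d-index `d` whose associated
range space has VC-dimension exactly `d`; in particular, for `d > 1` any dataset on ground
set `ℕ` containing the transactions `τ_i = {0,…,d} \ {i}` for `1 ≤ i ≤ d` together with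
arbitrary additional transactions of length at most `d` has VC-dimension exactly `d`. -/
theorem exists_dataset_vcDim_eq_dIndex :
    (∀ d : ℕ, 1 ≤ d → ∃ D : Finset (Finset ℕ), dIndex D = d ∧ vcDimEq D d) ∧
    (∀ d : ℕ, 1 < d → ∀ D : Finset (Finset ℕ),
      (∀ i : ℕ, 1 ≤ i → i ≤ d → (Finset.range (d + 1)).erase i ∈ D) →
      (∀ τ ∈ D, τ.card ≤ d) →
      vcDimEq D d) := by
  constructor
  · intro d hd
    set D : Finset (Finset ℕ) := (Finset.Icc 1 d).image (tauT d) with hDdef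
    have hmem : ∀ i, 1 ≤ i → i ≤ d → tauT d i ∈ D := by
      intro i h1 h2
      exact mem_image_of_mem _ (mem_Icc.mpr ⟨h1, h2⟩)
    have hcards : ∀ τ ∈ D, τ.card = d := by
      intro τ hτ
      obtain ⟨i, hi, rfl⟩ := mem_image.mp hτ
      exact tauT_card (mem_Icc.mp hi).2
    have hDcard : D.card = d := D0_card d hd
    have hge : dIndexGe D d := by
      refine ⟨D, Subset.rfl, hDcard.ge, fun τ hτ => (hcards τ hτ).ge, ?_⟩
      intro x hx y hy hxy hsub
      simp only [mem_coe, hDdef, mem_image] at hx hy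
      obtain ⟨i, hi, rfl⟩ := hx
      obtain ⟨j, hj, rfl⟩ := hy
      have hij : i ≠ j := fun h => hxy (h ▸ rfl)
      simp only [mem_Icc] at hi hj
      have : j ∈ tauT d i := mem_tauT.mpr ⟨fun h => hij h.symm, by omega⟩
      exact (mem_tauT.mp (hsub this)).1 rfl
    have hub : ∀ q, dIndexGe D q → q ≤ d := by
      rintro q ⟨A, hAD, hqA, -, -⟩
      calc q ≤ A.card := hqA
        _ ≤ D.card := card_le_card hAD
        _ = d := hDcard
    refine ⟨D, ?_, main_vc d hd D hmem (fun τ hτ => (hcards τ hτ).le)⟩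
    exact le_antisymm (csSup_le ⟨d, hge⟩ hub) (le_csSup ⟨d, fun q hq => hub q hq⟩ hge)
  · intro d hd D hmem hcard
    exact main_vc d (le_of_lt hd) D hmem hcard
end

section
/- Let D be a dataset with d-index d and associated range space S of VC-dimension at most d. Let 0 < ε, δ < 1 and let 𝒮 be a random sample of D that is an (ε/2)-approximation of the range space S. Then FI(𝒮, I, θ − ε/2) is an absolute ε-close approximation to FI(D, I, θ): (1) every itemset with f_D(A) ≥ θ is in FI(𝒮, I, θ − ε/2); (2) no itemset with f_D(A) < θ − ε is in it; (3) for every itemset A in it, |f_D(A) − f_𝒮(A)| ≤ ε. -/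
open Finset

/-- The frequency of itemset `A` in the dataset (finite multiset of transactions) `D`. -/
noncomputable def freq {α : Type*} [DecidableEq α] (D : Multiset (Finset α))
    (A : Finset α) : ℝ :=
  ((D.countP (fun τ => A ⊆ τ) : ℕ) : ℝ) / (Multiset.card D : ℝ)

theorem absolute_eps_close_FI_general {α : Type*} [DecidableEq α]
    (D S : Multiset (Finset α)) (θ ε : ℝ)
    (happrox : ∀ A : Finset α, A.Nonempty → |freq D A - freq S A| ≤ ε / 2) :
    (∀ A : Finset α, A.Nonempty → θ ≤ freq D A → θ - ε / 2 ≤ freq S A) ∧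
    (∀ A : Finset α, A.Nonempty → θ - ε / 2 ≤ freq S A → ¬ freq D A < θ - ε) ∧
    (∀ A : Finset α, A.Nonempty → θ - ε / 2 ≤ freq S A →
      |freq D A - freq S A| ≤ ε) := by
  refine ⟨fun A hA hD => ?_, fun A hA hS => ?_, fun A hA _ => ?_⟩
  · linarith [hD, (abs_le.mp (happrox A hA)).2]
  · linarith [hS, (abs_le.mp (happrox A hA)).1]
  · linarith [happrox A hA, abs_nonneg (freq D A - freq S A)]

/-- if the sample `S` is an `(ε/2)`-approximation of the range space of `D`,
then `FI(S, I, θ - ε/2)` is an absolute `ε`-close approximation to `FI(D, I, θ)`: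
(1) it contains every itemset of frequency at least `θ` in `D`; (2) it contains no itemset
of frequency less than `θ - ε` in `D`; (3) every itemset it contains has sample frequency
within `ε` of its true frequency. -/
theorem absolute_eps_close_FI {α : Type*} [DecidableEq α]
    (D S : Multiset (Finset α)) (θ ε : ℝ)
    (hε0 : 0 < ε) (hε1 : ε < 1) (hθ0 : 0 < θ) (hθ1 : θ ≤ 1)
    (happrox : ∀ A : Finset α, A.Nonempty → |freq D A - freq S A| ≤ ε / 2) :
    (∀ A : Finset α, A.Nonempty → θ ≤ freq D A → θ - ε / 2 ≤ freq S A) ∧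
    (∀ A : Finset α, A.Nonempty → θ - ε / 2 ≤ freq S A → ¬ freq D A < θ - ε) ∧
    (∀ A : Finset α, A.Nonempty → θ - ε / 2 ≤ freq S A →
      |freq D A - freq S A| ≤ ε) :=
  absolute_eps_close_FI_general D S θ ε happrox
end

section
/- Let 𝒮 be an (ε/4)-approximation of the range space associated with dataset D, and set η = f_𝒮^(K) − ε/2. Then FI(𝒮, I, η) is an absolute ε-close approximation to TOPK(D, I, K) = FI(D, I, f_D^(K)): it contains all of the top-K frequent itemsets of D, contains no itemset A with f_D(A) < f_D^(K) − ε, and the sample frequency of every itemset it contains is within ε of its true frequency. -/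
/-!
Frequencies that are `ε/4`-close itemset by itemset have `ε/4`-close `K`-th largest values,
because `K`-th largest values are determined by counting superlevel sets. Given
`|f_D^(K) - f_S^(K)| ≤ ε/4`, each of the three claims is a triangle inequality.
-/

open Finset

-- Otherwise the at least `K` points where `b ≤ g` would all satisfy `a < f`.
theorem le_add_of_le_ncard_of_ncard_lt {ι : Type*} [Finite ι] (P : ι → Prop) {f g : ι → ℝ}
    {a b δ : ℝ} {K : ℕ} (hfg : ∀ i, P i → g i ≤ f i + δ)
    (hg : K ≤ {i | P i ∧ b ≤ g i}.ncard) (hf : {i | P i ∧ a < f i}.ncard < K) :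
    b ≤ a + δ := by
  by_contra! h
  have hsub : {i | P i ∧ b ≤ g i} ⊆ {i | P i ∧ a < f i} := fun i ⟨hi, hbg⟩ =>
    ⟨hi, by linarith [hfg i hi]⟩
  have := Set.ncard_le_ncard hsub (Set.toFinite _)
  omega

theorem abs_sub_le_of_kth_largest {ι : Type*} [Finite ι] (P : ι → Prop) {f g : ι → ℝ}
    {a b δ : ℝ} {K : ℕ} (hfg : ∀ i, P i → |f i - g i| ≤ δ)
    (hfa : K ≤ {i | P i ∧ a ≤ f i}.ncard) (hfa' : {i | P i ∧ a < f i}.ncard < K)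
    (hgb : K ≤ {i | P i ∧ b ≤ g i}.ncard) (hgb' : {i | P i ∧ b < g i}.ncard < K) :
    |a - b| ≤ δ := by
  refine abs_sub_le_iff.mpr ⟨?_, ?_⟩
  · refine sub_left_le_of_le_add (le_add_of_le_ncard_of_ncard_lt P (fun i hi => ?_) hfa hgb')
    linarith [(abs_le.mp (hfg i hi)).2]
  · refine sub_left_le_of_le_add (le_add_of_le_ncard_of_ncard_lt P (fun i hi => ?_) hgb hfa')
    linarith [(abs_le.mp (hfg i hi)).1]

theorem absolute_eps_close_topK_general {α : Type*} [DecidableEq α] [Fintype α]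
    (D S : Multiset (Finset α)) (ε : ℝ) (K : ℕ) (fDK fSK : ℝ)
    (hD1 : K ≤ {A : Finset α | A.Nonempty ∧ fDK ≤ freq D A}.ncard)
    (hD2 : {A : Finset α | A.Nonempty ∧ fDK < freq D A}.ncard < K)
    (hS1 : K ≤ {A : Finset α | A.Nonempty ∧ fSK ≤ freq S A}.ncard)
    (hS2 : {A : Finset α | A.Nonempty ∧ fSK < freq S A}.ncard < K)
    (happrox : ∀ A : Finset α, A.Nonempty → |freq D A - freq S A| ≤ ε / 4) :
    (∀ A : Finset α, A.Nonempty → fDK ≤ freq D A → fSK - ε / 2 ≤ freq S A) ∧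
    (∀ A : Finset α, A.Nonempty → fSK - ε / 2 ≤ freq S A →
      ¬ freq D A < fDK - ε) ∧
    (∀ A : Finset α, A.Nonempty → fSK - ε / 2 ≤ freq S A →
      |freq D A - freq S A| ≤ ε) := by
  obtain ⟨hKlo, hKhi⟩ := abs_le.mp <|
    abs_sub_le_of_kth_largest (fun A : Finset α => A.Nonempty) happrox hD1 hD2 hS1 hS2
  refine ⟨fun A hA hDA => ?_, fun A hA hSA => ?_, fun A hA _ => ?_⟩
  · linarith [(abs_le.mp (happrox A hA)).2]
  · linarith [(abs_le.mp (happrox A hA)).1]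
  · linarith [happrox A hA, abs_nonneg (freq D A - freq S A)]

/-- if `S` is an `(ε/4)`-approximation of the range space of `D` and
`η = fSK - ε/2`, then `FI(S, I, η)` is an absolute `ε`-close approximation to
`TOPK(D, I, K) = FI(D, I, fDK)`: it contains all top-`K` frequent itemsets of `D`,
contains no itemset `A` with `f_D(A) < fDK - ε`, and the sample frequency of every itemset
it contains is within `ε` of its true frequency. -/
theorem absolute_eps_close_topK {α : Type*} [DecidableEq α] [Fintype α]
    (D S : Multiset (Finset α)) (ε : ℝ) (K : ℕ) (fDK fSK : ℝ)
    (hε0 : 0 < ε) (hε1 : ε < 1) (hK : 1 ≤ K)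
    (hD0 : ∃ A : Finset α, A.Nonempty ∧ freq D A = fDK)
    (hD1 : K ≤ {A : Finset α | A.Nonempty ∧ fDK ≤ freq D A}.ncard)
    (hD2 : {A : Finset α | A.Nonempty ∧ fDK < freq D A}.ncard < K)
    (hS0 : ∃ A : Finset α, A.Nonempty ∧ freq S A = fSK)
    (hS1 : K ≤ {A : Finset α | A.Nonempty ∧ fSK ≤ freq S A}.ncard)
    (hS2 : {A : Finset α | A.Nonempty ∧ fSK < freq S A}.ncard < K)
    (happrox : ∀ A : Finset α, A.Nonempty → |freq D A - freq S A| ≤ ε / 4) :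
    (∀ A : Finset α, A.Nonempty → fDK ≤ freq D A → fSK - ε / 2 ≤ freq S A) ∧
    (∀ A : Finset α, A.Nonempty → fSK - ε / 2 ≤ freq S A →
      ¬ freq D A < fDK - ε) ∧
    (∀ A : Finset α, A.Nonempty → fSK - ε / 2 ≤ freq S A →
      |freq D A - freq S A| ≤ ε) :=
  absolute_eps_close_topK_general D S ε K fDK fSK hD1 hD2 hS1 hS2 happrox
end

section
/- Let 0 < ε < 1, let φ = max{3, 2 − ε + 2√(1 − ε)}, η = ε/φ, and p = θ(1 − η)/(1 + η). If a sample 𝒮 of dataset D is a relative (p, η)-approximation of the associated range space, then every association rule W = "A ⇒ B" with f_D(W) ≥ θ and c_D(W) ≥ γ satisfies f_𝒮(W) ≥ (1 − η)θ and c_𝒮(W) ≥ γ(1 − η)/(1 + η), i.e., W ∈ AR(𝒮, I, (1 − η)θ, γ(1 − η)/(1 + η)). -/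
open Finset

lemma freq_anti {α : Type*} [DecidableEq α] (D : Multiset (Finset α)) {A X : Finset α}
    (h : A ⊆ X) : freq D X ≤ freq D A := by
  unfold freq
  gcongr
  have : D.countP (fun τ => X ⊆ τ) ≤ D.countP (fun τ => A ⊆ τ) := by
    simp only [Multiset.countP_eq_card_filter]
    exact Multiset.card_le_card
      (Multiset.monotone_filter_right D (fun τ hx => h.trans hx))
  exact_mod_cast this

/-- with `φ = max{3, 2-ε+2√(1-ε)}`, `η = ε/φ`, `p = θ(1-η)/(1+η)`, if the
sample `S` is a relative `(p, η)`-approximation of the range space of `D`, then every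
association rule `W = "A ⇒ B"` with `f_D(W) ≥ θ` and `c_D(W) ≥ γ` satisfies
`f_S(W) ≥ (1-η)θ` and `c_S(W) ≥ γ(1-η)/(1+η)`. -/
theorem ar_true_rules_survive {α : Type*} [DecidableEq α]
    (D S : Multiset (Finset α)) (θ γ ε φ η p : ℝ)
    (hε0 : 0 < ε) (hε1 : ε < 1) (hθ0 : 0 < θ) (hθ1 : θ ≤ 1)
    (hγ0 : 0 < γ) (hγ1 : γ ≤ 1)
    (hφ : φ = max 3 (2 - ε + 2 * Real.sqrt (1 - ε)))
    (hη : η = ε / φ)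
    (hp : p = θ * (1 - η) / (1 + η))
    (happrox : ∀ X : Finset α, X.Nonempty →
      (p ≤ freq D X → |freq D X - freq S X| ≤ η * freq D X) ∧
      (freq D X < p → freq S X ≤ (1 + η) * p))
    (A B : Finset α) (hA : A.Nonempty) (hB : B.Nonempty) (hdisj : Disjoint A B)
    (hf : θ ≤ freq D (A ∪ B))
    (hc : γ ≤ freq D (A ∪ B) / freq D A) :
    (1 - η) * θ ≤ freq S (A ∪ B) ∧
    γ * (1 - η) / (1 + η) ≤ freq S (A ∪ B) / freq S A := by
  have hφ3 : (3:ℝ) ≤ φ := hφ ▸ le_max_left _ _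
  have hφ0 : (0:ℝ) < φ := by linarith
  have hη0 : 0 < η := by rw [hη]; positivity
  have hη1 : η < 1 := by
    rw [hη, div_lt_one hφ0]; linarith
  have h1mη : 0 < 1 - η := by linarith
  have h1pη : 0 < 1 + η := by linarith
  -- p ≤ θ
  have hpθ : p ≤ θ := by
    rw [hp, div_le_iff₀ h1pη]; nlinarith
  have hAB : (A ∪ B).Nonempty := hA.mono Finset.subset_union_left
  have hDA : θ ≤ freq D A := hf.trans (freq_anti D Finset.subset_union_left)
  -- approximation on A ∪ B
  have h1 := (happrox (A ∪ B) hAB).1 (hpθ.trans hf)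
  rw [abs_le] at h1
  have hSAB : (1 - η) * freq D (A ∪ B) ≤ freq S (A ∪ B) := by linarith [h1.2]
  have goal1 : (1 - η) * θ ≤ freq S (A ∪ B) := by nlinarith
  refine ⟨goal1, ?_⟩
  -- approximation on A
  have h2 := (happrox A hA).1 (hpθ.trans hDA)
  rw [abs_le] at h2
  have hSA : freq S A ≤ (1 + η) * freq D A := by linarith [h2.1]
  have hSApos : 0 < freq S A := by
    have := (freq_anti S Finset.subset_union_left : freq S (A ∪ B) ≤ freq S A)
    nlinarith
  have hDApos : 0 < freq D A := lt_of_lt_of_le hθ0 hDA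
  have hγD : γ * freq D A ≤ freq D (A ∪ B) := by
    rw [le_div_iff₀ hDApos] at hc; linarith
  rw [div_le_div_iff₀ h1pη hSApos]
  nlinarith [mul_le_mul_of_nonneg_left hγD (le_of_lt h1mη),
    mul_le_mul_of_nonneg_left hSA (by positivity : (0:ℝ) ≤ γ * (1 - η)),
    mul_le_mul_of_nonneg_left hSAB (le_of_lt h1pη)]
end

section
/- Let τ be a transaction in a shattered set K ⊆ D with |K| = ℓ. For each of the 2^{ℓ−1} subsets 𝒜 of K containing τ, there is a nonempty itemset B_𝒜 with T_D(B_𝒜) ∩ K = 𝒜; moreover the itemsets B_𝒜 are pairwise distinct and each is contained in τ. Hence τ contains at least 2^{ℓ−1} distinct nonempty itemsets, so 2^{|τ|} − 1 ≥ 2^{ℓ−1}. -/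
open Finset

/-- let `τ` be a transaction in a shattered set `K ⊆ D` with `|K| = ℓ`.
To each subset `𝒜` of `K` containing `τ` one can assign a nonempty itemset `B_𝒜 ⊆ τ` with
`T_D(B_𝒜) ∩ K = 𝒜`, and these itemsets are pairwise distinct; hence `τ` contains at least
`2^(ℓ-1)` distinct nonempty itemsets, so `2^(ℓ-1) ≤ 2^|τ| - 1`. -/
theorem shattered_witness_itemsets {α : Type*} [DecidableEq α]
    (D K : Finset (Finset α)) (hK : K ⊆ D) (hsh : Shattered D K)
    (τ : Finset α) (hτ : τ ∈ K) :
    (∃ f : Finset (Finset α) → Finset α,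
      (∀ 𝒜 ⊆ K, τ ∈ 𝒜 →
        (f 𝒜).Nonempty ∧ f 𝒜 ⊆ τ ∧ suppSet D (f 𝒜) ∩ K = 𝒜) ∧
      (∀ 𝒜 ⊆ K, ∀ 𝒜' ⊆ K, τ ∈ 𝒜 → τ ∈ 𝒜' → f 𝒜 = f 𝒜' → 𝒜 = 𝒜')) ∧
    2 ^ (K.card - 1) ≤ 2 ^ τ.card - 1 := by
  classical
  set f : Finset (Finset α) → Finset α := fun 𝒜 =>
    if h : 𝒜 ⊆ K then (hsh 𝒜 h).choose else ∅ with hf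
  have hprop : ∀ 𝒜 ⊆ K, τ ∈ 𝒜 →
      (f 𝒜).Nonempty ∧ f 𝒜 ⊆ τ ∧ suppSet D (f 𝒜) ∩ K = 𝒜 := by
    intro 𝒜 hA hτA
    have h1 := (hsh 𝒜 hA).choose_spec
    have hfA : f 𝒜 = (hsh 𝒜 hA).choose := by simp [hf, hA]
    rw [hfA]
    have hτm : τ ∈ suppSet D (hsh 𝒜 hA).choose ∩ K := h1.2.symm ▸ hτA
    exact ⟨h1.1, (mem_filter.mp (mem_inter.mp hτm).1).2, h1.2⟩
  have hinj : ∀ 𝒜 ⊆ K, ∀ 𝒜' ⊆ K, τ ∈ 𝒜 → τ ∈ 𝒜' → f 𝒜 = f 𝒜' → 𝒜 = 𝒜' := by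
    intro 𝒜 hA 𝒜' hA' h1 h2 hfe
    have e1 := (hprop 𝒜 hA h1).2.2
    have e2 := (hprop 𝒜' hA' h2).2.2
    rw [← e1, ← e2, hfe]
  refine ⟨⟨f, hprop, hinj⟩, ?_⟩
  -- cardinality argument
  set S : Finset (Finset (Finset α)) := K.powerset.filter (fun 𝒜 => τ ∈ 𝒜) with hS
  have hScard : S.card = 2 ^ (K.card - 1) := by
    have : S = (K.erase τ).powerset.image (insert τ) := by
      ext 𝒜
      simp only [hS, mem_filter, mem_powerset, mem_image]
      constructor
      · rintro ⟨h1, h2⟩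
        refine ⟨𝒜.erase τ, ?_, by simp [insert_erase h2]⟩
        intro x hx
        exact mem_erase.mpr ⟨(mem_erase.mp hx).1, h1 (mem_erase.mp hx).2⟩
      · rintro ⟨B, hB, rfl⟩
        refine ⟨?_, mem_insert_self _ _⟩
        intro x hx
        rcases mem_insert.mp hx with rfl | hx
        · exact hτ
        · exact (mem_erase.mp (hB hx)).2
    rw [this, card_image_of_injOn, card_powerset, card_erase_of_mem hτ]
    intro a ha b hb hab
    have ha' := mem_powerset.mp ha
    have hb' := mem_powerset.mp hb
    have : ∀ x ∈ a, x ∈ b := fun x hx => by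
      have : x ∈ insert τ b := hab ▸ mem_insert_of_mem hx
      rcases mem_insert.mp this with rfl | h
      · exact absurd (ha' hx) (notMem_erase _ _)
      · exact h
    have h2 : ∀ x ∈ b, x ∈ a := fun x hx => by
      have : x ∈ insert τ a := hab ▸ mem_insert_of_mem hx
      rcases mem_insert.mp this with rfl | h
      · exact absurd (hb' hx) (notMem_erase _ _)
      · exact h
    exact Subset.antisymm this h2
  have himg : S.image f ⊆ τ.powerset.erase ∅ := by
    intro B hB
    obtain ⟨𝒜, hA, rfl⟩ := mem_image.mp hB
    have hA1 := mem_powerset.mp (mem_filter.mp hA).1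
    have hA2 := (mem_filter.mp hA).2
    obtain ⟨hne, hsub, _⟩ := hprop 𝒜 hA1 hA2
    exact mem_erase.mpr ⟨hne.ne_empty, mem_powerset.mpr hsub⟩
  have hSimg : (S.image f).card = S.card := by
    apply card_image_of_injOn
    intro a ha b hb hab
    exact hinj a (mem_powerset.mp (mem_filter.mp ha).1) b
      (mem_powerset.mp (mem_filter.mp hb).1) (mem_filter.mp ha).2 (mem_filter.mp hb).2 hab
  have : S.card ≤ (τ.powerset.erase ∅).card := hSimg ▸ card_le_card himg
  rwa [hScard, card_erase_of_mem (mem_powerset.mpr (empty_subset _)), card_powerset] at this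
end
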